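/- arXiv:1804.04750 — 6 statements merged into one kernel-verified Lean document; each statement's English description precedes it below -/
import Mathlib

section
/- Let P and Q be nonzero orthogonal projections on a complex Hilbert space, let A be a bounded linear operator, and let c ≥ 0 be a real number. Then ( ‖AQ‖ − ‖AP‖ )² ≤ ‖Q(A*A − c·1)Q‖ + ‖P(A*A − c·1)P‖. -/
/-!
By the C*-identity, `‖A Q‖² = ‖Q A* A Q‖`, and since a nonzero projection has norm one,
`‖c Q‖ = c`; hence `|‖A Q‖² - c| ≤ ‖Q (A* A - c) Q‖`, and likewise for `P`. The triangle
inequality bounds `|‖A Q‖² - ‖A P‖²|` by the sum of the two, and for nonnegative reals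
`(a - b)² ≤ |a² - b²|`.
-/

lemma sq_sub_le_abs_sq_sub_sq {a b : ℝ} (ha : 0 ≤ a) (hb : 0 ≤ b) :
    (a - b) ^ 2 ≤ |a ^ 2 - b ^ 2| := by
  rw [← sq_abs, sq, sq_sub_sq, abs_mul, abs_of_nonneg (add_nonneg ha hb)]
  exact mul_le_mul_of_nonneg_right (abs_sub_le_iff.mpr ⟨by linarith, by linarith⟩) (abs_nonneg _)

section CStarRing

variable {E : Type*} [NonUnitalNormedRing E] [StarRing E] [CStarRing E]

lemma IsStarProjection.norm_eq_one {p : E} (hp : IsStarProjection p) (hp₀ : p ≠ 0) :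
    ‖p‖ = 1 := by
  have hsq : ‖p‖ * ‖p‖ = ‖p‖ := by
    rw [← CStarRing.norm_star_mul_self, hp.isSelfAdjoint.star_eq, hp.isIdempotentElem.eq]
  exact (mul_eq_left₀ (norm_ne_zero_iff.mpr hp₀)).mp hsq

lemma IsSelfAdjoint.norm_mul_sq {p : E} (hp : IsSelfAdjoint p) (a : E) :
    ‖a * p‖ ^ 2 = ‖p * (star a * a) * p‖ := by
  rw [sq, ← CStarRing.norm_star_mul_self, star_mul, hp.star_eq]
  simp only [mul_assoc]

end CStarRing

lemma IsStarProjection.abs_norm_mul_sq_sub_le {E : Type*} [NormedRing E] [StarRing E]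
    [CStarRing E] [NormedAlgebra ℂ E] {p : E} (hp : IsStarProjection p) (hp₀ : p ≠ 0)
    (a : E) {c : ℝ} (hc : 0 ≤ c) :
    |‖a * p‖ ^ 2 - c| ≤ ‖p * (star a * a - (c : ℂ) • 1) * p‖ := by
  have hcp : ‖(c : ℂ) • p‖ = c := by
    rw [norm_smul, hp.norm_eq_one hp₀, mul_one, Complex.norm_real, Real.norm_of_nonneg hc]
  have hcompress : p * (star a * a - (c : ℂ) • 1) * p = p * (star a * a) * p - (c : ℂ) • p := by
    rw [mul_sub, sub_mul, mul_smul_one, smul_mul_assoc, hp.isIdempotentElem.eq]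
  calc |‖a * p‖ ^ 2 - c| = |‖p * (star a * a) * p‖ - ‖(c : ℂ) • p‖| := by
        rw [hp.isSelfAdjoint.norm_mul_sq, hcp]
    _ ≤ ‖p * (star a * a) * p - (c : ℂ) • p‖ := abs_norm_sub_norm_le _ _
    _ = ‖p * (star a * a - (c : ℂ) • 1) * p‖ := by rw [hcompress]

/-- The core C*-estimate in Lemma 3.4 of the paper: for nonzero orthogonal
projections `P`, `Q`, a bounded operator `A` and `c ≥ 0`,
`(‖AQ‖ − ‖AP‖)² ≤ ‖Q(A*A − c·1)Q‖ + ‖P(A*A − c·1)P‖`. -/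
theorem projection_norm_difference_sq_bound {H : Type*} [NormedAddCommGroup H]
    [InnerProductSpace ℂ H] [CompleteSpace H]
    (P Q A : H →L[ℂ] H)
    (hP_sa : IsSelfAdjoint P) (hP_idem : P * P = P) (hP_ne : P ≠ 0)
    (hQ_sa : IsSelfAdjoint Q) (hQ_idem : Q * Q = Q) (hQ_ne : Q ≠ 0)
    (c : ℝ) (hc : 0 ≤ c) :
    (‖A * Q‖ - ‖A * P‖) ^ 2
      ≤ ‖Q * (star A * A - (c : ℂ) • 1) * Q‖ + ‖P * (star A * A - (c : ℂ) • 1) * P‖ := by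
  have hQ := (IsStarProjection.mk hQ_idem hQ_sa).abs_norm_mul_sq_sub_le hQ_ne A hc
  have hP := (IsStarProjection.mk hP_idem hP_sa).abs_norm_mul_sq_sub_le hP_ne A hc
  calc (‖A * Q‖ - ‖A * P‖) ^ 2
      ≤ |‖A * Q‖ ^ 2 - ‖A * P‖ ^ 2| := sq_sub_le_abs_sq_sub_sq (norm_nonneg _) (norm_nonneg _)
    _ ≤ |‖A * Q‖ ^ 2 - c| + |‖A * P‖ ^ 2 - c| := by
        rw [abs_sub_comm (‖A * P‖ ^ 2)]
        exact abs_sub_le _ _ _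
    _ ≤ _ := add_le_add hQ hP
end

section
/- Let S be a finite index set, let (P_x)_{x∈S} be pairwise commuting orthogonal projections on a complex Hilbert space, and let (Θ_x)_{x∈S} be bounded operators such that Θ_x P_x = P_x Θ_x = 0 and Θ_x P_y = P_y Θ_x for all x, y ∈ S. Then for every vector u, | ⟨u, (∑_{x∈S} Θ_x) u⟩ | ≤ (max_{x∈S} ‖Θ_x‖) · ∑_{x∈S} ⟨u, (1−P_x) u⟩. Consequently, if H is a self-adjoint operator and γ > 0 with γ·∑_{x∈S}(1−P_x) ≤ H (as quadratic forms), then |⟨u, (∑_{x∈S} Θ_x) u⟩| ≤ (max_{x∈S}‖Θ_x‖ / γ)·⟨u, H u⟩ for all u. -/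
/-!
Write `Q x = 1 - P x`. The annihilation conditions say exactly that `Θ x = Q x Θ x Q x`, so
`⟨u, Θ x u⟩ = ⟨Q x u, Θ x (Q x u)⟩` has modulus at most `‖Θ x‖ ‖Q x u‖²`, and
`‖Q x u‖² = ⟨u, Q x u⟩` because `Q x` is an orthogonal projection. Summing over `x` gives the
first bound; the second follows by dividing the domination hypothesis by `γ`.
-/

open RCLike
open scoped InnerProductSpace

theorem one_sub_mul_mul_one_sub_of_mul_eq_zero {R : Type*} [Ring R] {p θ : R}
    (hθp : θ * p = 0) (hpθ : p * θ = 0) : (1 - p) * θ * (1 - p) = θ := by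
  simp only [mul_sub, sub_mul, one_mul, mul_one, hθp, hpθ, sub_zero]

section

variable {𝕜 E : Type*} [RCLike 𝕜] [NormedAddCommGroup E] [InnerProductSpace 𝕜 E]
  [CompleteSpace E]

theorem IsStarProjection.re_inner_apply_self {q : E →L[𝕜] E} (hq : IsStarProjection q)
    (u : E) : re ⟪u, q u⟫_𝕜 = ‖q u‖ ^ 2 := by
  have hqq : q (q u) = q u := congr($(hq.isIdempotentElem.eq) u)
  calc re ⟪u, q u⟫_𝕜 = re ⟪u, q (q u)⟫_𝕜 := by rw [hqq]
    _ = re ⟪q u, q u⟫_𝕜 := congrArg re (hq.isSelfAdjoint.isSymmetric u (q u)).symm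
    _ = ‖q u‖ ^ 2 := inner_self_eq_norm_sq _

theorem IsSelfAdjoint.norm_inner_apply_le_of_conj_eq {q θ : E →L[𝕜] E} (hq : IsSelfAdjoint q)
    (hθ : q * θ * q = θ) (u : E) : ‖⟪u, θ u⟫_𝕜‖ ≤ ‖θ‖ * ‖q u‖ ^ 2 := by
  have hcompress : ⟪u, θ u⟫_𝕜 = ⟪q u, θ (q u)⟫_𝕜 := by
    conv_lhs => rw [← hθ]
    exact (hq.isSymmetric u (θ (q u))).symm
  calc ‖⟪u, θ u⟫_𝕜‖ = ‖⟪q u, θ (q u)⟫_𝕜‖ := by rw [hcompress]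
    _ ≤ ‖q u‖ * (‖θ‖ * ‖q u‖) :=
      (norm_inner_le_norm _ _).trans (by gcongr; exact θ.le_opNorm _)
    _ = ‖θ‖ * ‖q u‖ ^ 2 := by ring

theorem IsStarProjection.norm_inner_apply_le_of_mul_eq_zero {p θ : E →L[𝕜] E}
    (hp : IsStarProjection p) (hθp : θ * p = 0) (hpθ : p * θ = 0) (u : E) :
    ‖⟪u, θ u⟫_𝕜‖ ≤ ‖θ‖ * re ⟪u, (1 - p) u⟫_𝕜 := by
  rw [hp.one_sub.re_inner_apply_self]
  exact hp.one_sub.isSelfAdjoint.norm_inner_apply_le_of_conj_eq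
    (one_sub_mul_mul_one_sub_of_mul_eq_zero hθp hpθ) u

theorem norm_inner_sum_apply_le_mul_sum_re_inner_one_sub {ι : Type*} [Fintype ι]
    {P Θ : ι → E →L[𝕜] E} {M : ℝ} (hP : ∀ i, IsStarProjection (P i))
    (hΘP : ∀ i, Θ i * P i = 0 ∧ P i * Θ i = 0) (hM : ∀ i, ‖Θ i‖ ≤ M) (u : E) :
    ‖⟪u, (∑ i, Θ i) u⟫_𝕜‖ ≤ M * ∑ i, re ⟪u, (1 - P i) u⟫_𝕜 := by
  rw [sum_apply, inner_sum, Finset.mul_sum]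
  refine (norm_sum_le _ _).trans (Finset.sum_le_sum fun i _ => ?_)
  have hre_nonneg : 0 ≤ re ⟪u, (1 - P i) u⟫_𝕜 := by
    rw [(hP i).one_sub.re_inner_apply_self]; positivity
  calc ‖⟪u, Θ i u⟫_𝕜‖ ≤ ‖Θ i‖ * re ⟪u, (1 - P i) u⟫_𝕜 :=
        (hP i).norm_inner_apply_le_of_mul_eq_zero (hΘP i).1 (hΘP i).2 u
    _ ≤ M * re ⟪u, (1 - P i) u⟫_𝕜 := by gcongr; exact hM i

end

theorem form_bound_by_complementary_projections_general {H : Type*} [NormedAddCommGroup H]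
    [InnerProductSpace ℂ H] [CompleteSpace H]
    (n : ℕ) (P : Fin (n + 1) → (H →L[ℂ] H))
    (hsa : ∀ i, IsSelfAdjoint (P i))
    (hidem : ∀ i, P i * P i = P i)
    (Θ : Fin (n + 1) → (H →L[ℂ] H))
    (hΘP : ∀ i, Θ i * P i = 0 ∧ P i * Θ i = 0) :
    (∀ u : H, ‖(inner ℂ u ((∑ i, Θ i) u) : ℂ)‖
        ≤ (Finset.univ.sup' Finset.univ_nonempty fun i => ‖Θ i‖) *
            ∑ i, (inner ℂ u (((1 : H →L[ℂ] H) - P i) u) : ℂ).re)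
      ∧ ∀ Hop : H →L[ℂ] H, IsSelfAdjoint Hop → ∀ γ : ℝ, 0 < γ →
          (∀ u : H, γ * ∑ i, (inner ℂ u (((1 : H →L[ℂ] H) - P i) u) : ℂ).re
              ≤ (inner ℂ u (Hop u) : ℂ).re) →
          ∀ u : H, ‖(inner ℂ u ((∑ i, Θ i) u) : ℂ)‖
            ≤ ((Finset.univ.sup' Finset.univ_nonempty fun i => ‖Θ i‖) / γ) *
                (inner ℂ u (Hop u) : ℂ).re := by
  set M : ℝ := Finset.univ.sup' Finset.univ_nonempty fun i => ‖Θ i‖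
  have hM : ∀ i, ‖Θ i‖ ≤ M := fun i => Finset.le_sup' (fun i => ‖Θ i‖) (Finset.mem_univ i)
  have hM_nonneg : 0 ≤ M := (norm_nonneg _).trans (hM 0)
  have hbound := norm_inner_sum_apply_le_mul_sum_re_inner_one_sub
    (fun i => ⟨hidem i, hsa i⟩) hΘP hM
  refine ⟨hbound, fun Hop _ γ hγ hdom u => ?_⟩
  calc _ ≤ M * ∑ i, (inner ℂ u (((1 : H →L[ℂ] H) - P i) u) : ℂ).re := hbound u
    _ = M / γ * (γ * ∑ i, (inner ℂ u (((1 : H →L[ℂ] H) - P i) u) : ℂ).re) := by field_simp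
    _ ≤ M / γ * (inner ℂ u (Hop u) : ℂ).re := by gcongr; exact hdom u

/-- The abstract core of Proposition 3.8 of the paper: if each `Θ x` is annihilated
on both sides by its own projection `P x` and commutes with all projections in the
family, then `|⟨u, (∑ Θ x) u⟩| ≤ (max ‖Θ x‖) · ∑ ⟨u, (1−P x) u⟩`; consequently the
sum is form-bounded by any self-adjoint `H` dominating `γ·∑(1−P x)`. -/
theorem form_bound_by_complementary_projections {H : Type*} [NormedAddCommGroup H]
    [InnerProductSpace ℂ H] [CompleteSpace H]
    (n : ℕ) (P : Fin (n + 1) → (H →L[ℂ] H))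
    (hsa : ∀ i, IsSelfAdjoint (P i))
    (hidem : ∀ i, P i * P i = P i)
    (hcomm : ∀ i j, Commute (P i) (P j))
    (Θ : Fin (n + 1) → (H →L[ℂ] H))
    (hΘP : ∀ i, Θ i * P i = 0 ∧ P i * Θ i = 0)
    (hΘcomm : ∀ i j, Θ i * P j = P j * Θ i) :
    (∀ u : H, ‖(inner ℂ u ((∑ i, Θ i) u) : ℂ)‖
        ≤ (Finset.univ.sup' Finset.univ_nonempty fun i => ‖Θ i‖) *
            ∑ i, (inner ℂ u (((1 : H →L[ℂ] H) - P i) u) : ℂ).re)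
      ∧ ∀ Hop : H →L[ℂ] H, IsSelfAdjoint Hop → ∀ γ : ℝ, 0 < γ →
          (∀ u : H, γ * ∑ i, (inner ℂ u (((1 : H →L[ℂ] H) - P i) u) : ℂ).re
              ≤ (inner ℂ u (Hop u) : ℂ).re) →
          ∀ u : H, ‖(inner ℂ u ((∑ i, Θ i) u) : ℂ)‖
            ≤ ((Finset.univ.sup' Finset.univ_nonempty fun i => ‖Θ i‖) / γ) *
                (inner ℂ u (Hop u) : ℂ).re :=
  form_bound_by_complementary_projections_general n P hsa hidem Θ hΘP
end

section
/- Let H be a positive-semidefinite self-adjoint operator on a finite-dimensional complex inner product space, let V be a self-adjoint operator, and let p, q ≥ 0 satisfy |⟨u, V u⟩| ≤ q·‖u‖² + p·⟨u, H u⟩ for all vectors u. Let z be a real number that is not an eigenvalue of H, and set R = (z·1 − H)^{−1}. Then ‖ |R|^{1/2} V |R|^{1/2} ‖ ≤ q·‖R‖ + p·(1 + |z|·‖R‖), where |R| = (R*R)^{1/2} and |R|^{1/2} is its positive square root. -/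
/-!
Sandwiching the form bound between `T = |R|^{1/2}` gives
`|⟨u, TVTu⟩| ≤ q ‖Tu‖² + p ⟨Tu, H Tu⟩ = q ⟨u, T²u⟩ + p ⟨u, H T² u⟩`, and for the self-adjoint
operator `TVT` such a bound on the quadratic form bounds the norm. Since `T` is a function of
`R*R`, which commutes with `H`, the C*-identity gives `‖T²‖ = ‖R‖` and `‖H T²‖ = ‖H R‖`, while
`H R = z R - 1`.
-/

open scoped InnerProductSpace

theorem CStarRing.norm_eq_of_star_mul_self_eq {E : Type*} [NonUnitalNormedRing E] [StarRing E]
    [CStarRing E] {a b : E} (h : star a * a = star b * b) : ‖a‖ = ‖b‖ := by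
  have h' := congrArg norm h
  rwa [norm_star_mul_self, norm_star_mul_self,
    mul_self_inj (norm_nonneg _) (norm_nonneg _)] at h'

theorem IsSelfAdjoint.star_mul_self_mul {R : Type*} [Semigroup R] [StarMul R] {a c : R}
    (hc : IsSelfAdjoint c) (h : Commute c (star a)) :
    star (c * a) * (c * a) = c * c * (star a * a) := by
  rw [star_mul, hc.star_eq]
  calc star a * c * (c * a) = star a * (c * c) * a := by simp only [mul_assoc]
    _ = c * c * (star a * a) := by rw [← (h.mul_left h).eq, mul_assoc]

section CStarAlgebra

variable {A : Type*} [CStarAlgebra A] [PartialOrder A] [StarOrderedRing A] {a b : A}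

theorem Commute.of_sq_left_of_nonneg (ha : 0 ≤ a) (h : Commute (a ^ 2) b) : Commute a b := by
  rw [← CFC.sqrt_sq a, CFC.sqrt_eq_cfc]
  exact h.cfc_nnreal _

theorem Commute.of_pow_four_left_of_nonneg (ha : 0 ≤ a) (h : Commute (a ^ 4) b) :
    Commute a b := by
  rw [show a ^ 4 = (a ^ 2) ^ 2 by rw [← pow_mul]] at h
  exact (h.of_sq_left_of_nonneg (CStarAlgebra.pow_nonneg ha 2)).of_sq_left_of_nonneg ha

end CStarAlgebra

namespace ContinuousLinearMap

variable {𝕜 E : Type*} [RCLike 𝕜] [NormedAddCommGroup E] [InnerProductSpace 𝕜 E]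

theorem re_inner_apply_self_le_norm_mul_sq (A : E →L[𝕜] E) (x : E) :
    RCLike.re ⟪x, A x⟫_𝕜 ≤ ‖A‖ * ‖x‖ ^ 2 :=
  calc RCLike.re ⟪x, A x⟫_𝕜 ≤ ‖x‖ * ‖A x‖ := re_inner_le_norm _ _
    _ ≤ ‖x‖ * (‖A‖ * ‖x‖) := by gcongr; exact A.le_opNorm x
    _ = ‖A‖ * ‖x‖ ^ 2 := by ring

theorem norm_le_of_norm_inner_apply_self_le (A : E →L[𝕜] E) (hA : (A : E →ₗ[𝕜] E).IsSymmetric)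
    {C : ℝ} (hC : 0 ≤ C) (h : ∀ x, ‖⟪x, A x⟫_𝕜‖ ≤ C * ‖x‖ ^ 2) : ‖A‖ ≤ C := by
  rw [A.norm_eq_iSup_rayleighQuotient hA]
  refine ciSup_le fun x => ?_
  rcases eq_or_ne x 0 with rfl | hx
  · simpa using hC
  rw [rayleighQuotient, reApplyInnerSelf_apply, abs_div, abs_sq, div_le_iff₀ (by positivity)]
  calc |RCLike.re ⟪A x, x⟫_𝕜| ≤ ‖⟪A x, x⟫_𝕜‖ := RCLike.abs_re_le_norm _
    _ = ‖⟪x, A x⟫_𝕜‖ := norm_inner_symm _ _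
    _ ≤ C * ‖x‖ ^ 2 := h x

theorem commute_of_mul_smul_one_sub_eq_one {h r : E →L[𝕜] E} {z : 𝕜}
    (hl : r * (z • 1 - h) = 1) (hr : (z • 1 - h) * r = 1) : Commute h r := by
  have h' := hl.trans hr.symm
  simp only [mul_sub, sub_mul, mul_smul_comm, smul_mul_assoc, mul_one, one_mul,
    sub_right_inj] at h'
  exact h'.symm

theorem norm_mul_le_of_smul_one_sub_mul_eq_one {h r : E →L[𝕜] E} {z : 𝕜}
    (hz : (z • 1 - h) * r = 1) : ‖h * r‖ ≤ 1 + ‖z‖ * ‖r‖ := by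
  have hr : h * r = z • r - 1 := by rw [← hz, sub_mul, smul_mul_assoc, one_mul, sub_sub_cancel]
  rw [hr, add_comm, ← norm_smul]
  exact (norm_sub_le _ _).trans (add_le_add_right norm_id_le _)

theorem _root_.IsSelfAdjoint.inner_mul_mul_apply [CompleteSpace E] {T : E →L[𝕜] E}
    (hT : IsSelfAdjoint T) (B : E →L[𝕜] E) (x y : E) :
    ⟪x, (T * B * T) y⟫_𝕜 = ⟪T x, B (T y)⟫_𝕜 :=
  (hT.isSymmetric x (B (T y))).symm

theorem _root_.IsSelfAdjoint.re_inner_apply_le [CompleteSpace E] {T : E →L[𝕜] E}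
    (hT : IsSelfAdjoint T) (B : E →L[𝕜] E) (x : E) :
    RCLike.re ⟪T x, B (T x)⟫_𝕜 ≤ ‖T * B * T‖ * ‖x‖ ^ 2 := by
  rw [← hT.inner_mul_mul_apply]
  exact re_inner_apply_self_le_norm_mul_sq _ x

end ContinuousLinearMap

theorem resolvent_sandwich_bound_general {H : Type*} [NormedAddCommGroup H]
    [InnerProductSpace ℂ H] [FiniteDimensional ℂ H]
    (Hop V R T : H →L[ℂ] H)
    (hH_sa : IsSelfAdjoint Hop)
    (hV_sa : IsSelfAdjoint V)
    (p q : ℝ) (hp : 0 ≤ p) (hq : 0 ≤ q)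
    (hbound : ∀ u : H,
      ‖(inner ℂ u (V u) : ℂ)‖ ≤ q * ‖u‖ ^ 2 + p * (inner ℂ u (Hop u) : ℂ).re)
    (z : ℝ) (hzL : R * ((z : ℂ) • 1 - Hop) = 1) (hzR : ((z : ℂ) • 1 - Hop) * R = 1)
    (hT_sa : IsSelfAdjoint T) (hT_pos : ∀ u : H, 0 ≤ (inner ℂ u (T u) : ℂ).re)
    (hT4 : T ^ 4 = star R * R) :
    ‖T * V * T‖ ≤ q * ‖R‖ + p * (1 + |z| * ‖R‖) := by
  have hHR : Commute Hop R := ContinuousLinearMap.commute_of_mul_smul_one_sub_eq_one hzL hzR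
  have hHR' : Commute Hop (star R) := hH_sa.star_eq ▸ hHR.star_star
  have hT : 0 ≤ T := (T.nonneg_iff_isPositive).2
    ⟨hT_sa.isSymmetric, fun u => (inner_re_symm (𝕜 := ℂ) _ _).trans_ge (hT_pos u)⟩
  have hHT : Commute Hop T :=
    (Commute.of_pow_four_left_of_nonneg hT (hT4 ▸ (hHR'.mul_right hHR).symm)).symm
  have hTT : ‖T * 1 * T‖ = ‖R‖ := CStarRing.norm_eq_of_star_mul_self_eq <| by
    rw [mul_one, ← sq, (hT_sa.pow 2).star_eq, ← pow_add, hT4]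
  have hTHT : ‖T * Hop * T‖ = ‖Hop * R‖ := CStarRing.norm_eq_of_star_mul_self_eq <| by
    rw [← hHT.eq, mul_assoc, ← sq, hH_sa.star_mul_self_mul hHR',
      hH_sa.star_mul_self_mul (by rw [(hT_sa.pow 2).star_eq]; exact hHT.pow_right 2),
      (hT_sa.pow 2).star_eq, ← pow_add, hT4]
  have hHR_le : ‖Hop * R‖ ≤ 1 + |z| * ‖R‖ := by
    simpa using ContinuousLinearMap.norm_mul_le_of_smul_one_sub_mul_eq_one hzR
  refine ContinuousLinearMap.norm_le_of_norm_inner_apply_self_le _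
    (by simpa [hT_sa.star_eq] using (hV_sa.conjugate T).isSymmetric) (by positivity) fun u => ?_
  calc ‖(inner ℂ u ((T * V * T) u) : ℂ)‖
      ≤ q * RCLike.re ⟪T u, (1 : H →L[ℂ] H) (T u)⟫_ℂ + p * RCLike.re ⟪T u, Hop (T u)⟫_ℂ := by
        rw [hT_sa.inner_mul_mul_apply, one_apply_eq_self, inner_self_eq_norm_sq]
        exact hbound (T u)
    _ ≤ q * (‖R‖ * ‖u‖ ^ 2) + p * ((1 + |z| * ‖R‖) * ‖u‖ ^ 2) := by
        grw [hT_sa.re_inner_apply_le, hT_sa.re_inner_apply_le, hTT, hTHT, hHR_le]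
    _ = (q * ‖R‖ + p * (1 + |z| * ‖R‖)) * ‖u‖ ^ 2 := by ring

/-- The resolvent estimate (3.14) of the paper: if `|⟨u,Vu⟩| ≤ q‖u‖² + p⟨u,Hu⟩`
with `H ≥ 0` self-adjoint, `z` real with invertible `z·1 − H` and inverse `R`, and
`T = |R|^{1/2}` (the positive fourth root of `R*R`), then
`‖T V T‖ ≤ q‖R‖ + p(1 + |z|‖R‖)`. -/
theorem resolvent_sandwich_bound {H : Type*} [NormedAddCommGroup H]
    [InnerProductSpace ℂ H] [FiniteDimensional ℂ H]
    (Hop V R T : H →L[ℂ] H)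
    (hH_sa : IsSelfAdjoint Hop) (hH_pos : ∀ u : H, 0 ≤ (inner ℂ u (Hop u) : ℂ).re)
    (hV_sa : IsSelfAdjoint V)
    (p q : ℝ) (hp : 0 ≤ p) (hq : 0 ≤ q)
    (hbound : ∀ u : H,
      ‖(inner ℂ u (V u) : ℂ)‖ ≤ q * ‖u‖ ^ 2 + p * (inner ℂ u (Hop u) : ℂ).re)
    (z : ℝ) (hzL : R * ((z : ℂ) • 1 - Hop) = 1) (hzR : ((z : ℂ) • 1 - Hop) * R = 1)
    (hT_sa : IsSelfAdjoint T) (hT_pos : ∀ u : H, 0 ≤ (inner ℂ u (T u) : ℂ).re)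
    (hT4 : T ^ 4 = star R * R) :
    ‖T * V * T‖ ≤ q * ‖R‖ + p * (1 + |z| * ‖R‖) :=
  resolvent_sandwich_bound_general Hop V R T hH_sa hV_sa p q hp hq hbound z hzL hzR hT_sa hT_pos hT4
end

section
/- Let H be a self-adjoint operator on a finite-dimensional complex Hilbert space, λ a real number with H ≥ λ·1, P an orthogonal projection commuting with H such that ‖(H − λ·1)P‖ ≤ c for some c ≥ 0, and ρ a positive-semidefinite operator with trace 1 satisfying PρP = ρ. Then for every operator A: Re tr( ρ · A*(HA − AH) ) ≥ −c·‖A‖², and | Im tr( ρ · A*(HA − AH) ) | ≤ c·‖A‖². -/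
/-!
With `K = H - λ ≥ 0` the commutator splits as `A* [H, A] = A* K A - A* A K`. The first term
has a nonnegative (in particular real) expectation, being the trace of a product of two positive
operators, computed in an eigenbasis of `ρ`. For the second, `ρ = P ρ` and cyclicity of the trace
give `tr (ρ A* A K) = tr (ρ A* A (K P))`, and a state `ρ` satisfies `|tr (ρ B)| ≤ ‖B‖`, so this term
is at most `‖A* A‖ ‖K P‖ ≤ c ‖A‖²` in modulus.
-/

open scoped InnerProductSpace ComplexOrder

namespace ContinuousLinearMap

variable {𝕜 E : Type*} [RCLike 𝕜] [NormedAddCommGroup E] [InnerProductSpace 𝕜 E]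

theorem isPositive_sub_smul_one [CompleteSpace E] {T : E →L[𝕜] E} (hT : IsSelfAdjoint T) {r : ℝ}
    (h : ∀ u, r * ‖u‖ ^ 2 ≤ RCLike.re ⟪u, T u⟫_𝕜) : (T - (r : 𝕜) • 1).IsPositive := by
  refine isPositive_def'.mpr ⟨hT.sub (.smul (by simp [IsSelfAdjoint]) (.one _)), fun u => ?_⟩
  rw [reApplyInnerSelf, inner_re_symm]
  simp only [sub_apply, smul_apply, one_apply_eq_self, inner_sub_right, inner_smul_right, map_sub,
    RCLike.re_ofReal_mul, inner_self_eq_norm_sq]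
  linarith [h u]

theorem trace_mul_eq_trace_mul_mul_of_mul_eq {ρ P : E →L[𝕜] E} (h : P * ρ = ρ) (X : E →L[𝕜] E) :
    LinearMap.trace 𝕜 E (ρ * X).toLinearMap = LinearMap.trace 𝕜 E (ρ * (X * P)).toLinearMap := by
  conv_lhs => rw [← h]
  rw [mul_assoc, toLinearMap_mul, LinearMap.trace_mul_comm, ← toLinearMap_mul, mul_assoc]

variable [FiniteDimensional 𝕜 E]

theorem _root_.LinearMap.IsSymmetric.trace_mul_eq_sum_eigenvalues_mul_inner {T : E →L[𝕜] E}
    (hT : (T : E →ₗ[𝕜] E).IsSymmetric) {n : ℕ} (hn : Module.finrank 𝕜 E = n) (B : E →L[𝕜] E) :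
    LinearMap.trace 𝕜 E (T * B).toLinearMap =
      ∑ i, (hT.eigenvalues hn i : 𝕜) *
        ⟪hT.eigenvectorBasis hn i, B (hT.eigenvectorBasis hn i)⟫_𝕜 := by
  rw [LinearMap.trace_eq_sum_inner _ (hT.eigenvectorBasis hn)]
  refine Fintype.sum_congr _ _ fun i => ?_
  rw [toLinearMap_mul, Module.End.mul_apply, ← hT, hT.apply_eigenvectorBasis, inner_smul_left,
    RCLike.conj_ofReal]
  rfl

theorem IsPositive.trace_mul_nonneg {T B : E →L[𝕜] E} (hT : T.IsPositive) (hB : B.IsPositive) :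
    0 ≤ LinearMap.trace 𝕜 E (T * B).toLinearMap := by
  rw [hT.toLinearMap.isSymmetric.trace_mul_eq_sum_eigenvalues_mul_inner rfl]
  exact Finset.sum_nonneg fun i _ => mul_nonneg
    (RCLike.ofReal_nonneg.mpr (hT.toLinearMap.nonneg_eigenvalues rfl i)) (hB.inner_nonneg_right _)

theorem IsPositive.norm_trace_mul_le {T : E →L[𝕜] E} (hT : T.IsPositive) (B : E →L[𝕜] E) :
    ‖LinearMap.trace 𝕜 E (T * B).toLinearMap‖ ≤ RCLike.re (LinearMap.trace 𝕜 E T) * ‖B‖ := by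
  have hT' := hT.toLinearMap.isSymmetric
  set e := hT'.eigenvectorBasis rfl
  rw [hT'.trace_mul_eq_sum_eigenvalues_mul_inner rfl, hT'.re_trace_eq_sum_eigenvalues rfl,
    Finset.sum_mul]
  refine (norm_sum_le _ _).trans (Finset.sum_le_sum fun i _ => ?_)
  rw [norm_mul, RCLike.norm_of_nonneg (hT.toLinearMap.nonneg_eigenvalues rfl i)]
  refine mul_le_mul_of_nonneg_left ?_ (hT.toLinearMap.nonneg_eigenvalues rfl i)
  calc ‖⟪e i, B (e i)⟫_𝕜‖ ≤ ‖e i‖ * (‖B‖ * ‖e i‖) :=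
        (norm_inner_le_norm _ _).trans (by gcongr; exact B.le_opNorm _)
    _ = ‖B‖ := by rw [e.norm_eq_one]; ring

end ContinuousLinearMap

open ContinuousLinearMap in
theorem approximate_ground_state_energy_bound_general {H : Type*} [NormedAddCommGroup H]
    [InnerProductSpace ℂ H] [FiniteDimensional ℂ H]
    (Hop P ρ : H →L[ℂ] H) (lam c : ℝ)
    (hH_sa : IsSelfAdjoint Hop)
    (hH_ge : ∀ u : H, lam * ‖u‖ ^ 2 ≤ (inner ℂ u (Hop u) : ℂ).re)
    (hP_idem : P * P = P)
    (hnorm : ‖(Hop - (lam : ℂ) • 1) * P‖ ≤ c)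
    (hρ_sa : IsSelfAdjoint ρ) (hρ_pos : ∀ u : H, 0 ≤ (inner ℂ u (ρ u) : ℂ).re)
    (htr : LinearMap.trace ℂ H ρ.toLinearMap = 1)
    (hsupp : P * ρ * P = ρ) :
    ∀ A : H →L[ℂ] H,
      -c * ‖A‖ ^ 2
          ≤ (LinearMap.trace ℂ H (ρ * (star A * (Hop * A - A * Hop))).toLinearMap).re
        ∧ |(LinearMap.trace ℂ H (ρ * (star A * (Hop * A - A * Hop))).toLinearMap).im|
            ≤ c * ‖A‖ ^ 2 := by
  intro A
  set K := Hop - (lam : ℂ) • 1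
  have hK : K.IsPositive := isPositive_sub_smul_one hH_sa hH_ge
  have hρ : ρ.IsPositive :=
    isPositive_def'.mpr ⟨hρ_sa, fun u => by rw [reApplyInnerSelf, inner_re_symm]; exact hρ_pos u⟩
  have hPρ : P * ρ = ρ := by rw [← hsupp, ← mul_assoc, ← mul_assoc, hP_idem]
  have hcomm : star A * (Hop * A - A * Hop) = star A * K * A - star A * A * K := by
    simp only [K, mul_sub, sub_mul, mul_smul_comm, smul_mul_assoc, mul_one, mul_assoc]
    abel
  set t₁ := LinearMap.trace ℂ H (ρ * (star A * K * A)).toLinearMap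
  set t₂ := LinearMap.trace ℂ H (ρ * (star A * A * K)).toLinearMap
  have hsplit : LinearMap.trace ℂ H (ρ * (star A * (Hop * A - A * Hop))).toLinearMap = t₁ - t₂ := by
    rw [hcomm, mul_sub, toLinearMap_sub, map_sub]
  have ht₁ : 0 ≤ t₁ := hρ.trace_mul_nonneg (hK.adjoint_conj A)
  have ht₂ : ‖t₂‖ ≤ c * ‖A‖ ^ 2 := calc
    ‖t₂‖ = ‖LinearMap.trace ℂ H (ρ * (star A * A * (K * P))).toLinearMap‖ := by
      rw [← mul_assoc _ K P, ← trace_mul_eq_trace_mul_mul_of_mul_eq hPρ]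
    _ ≤ (LinearMap.trace ℂ H ρ).re * ‖star A * A * (K * P)‖ := hρ.norm_trace_mul_le _
    _ ≤ ‖star A * A‖ * ‖K * P‖ := by
      rw [htr, Complex.one_re, one_mul]
      exact norm_mul_le _ _
    _ ≤ ‖A‖ ^ 2 * c :=
      mul_le_mul (sq ‖A‖ ▸ CStarRing.norm_star_mul_self.le) hnorm (norm_nonneg _) (sq_nonneg _)
    _ = c * ‖A‖ ^ 2 := mul_comm _ _
  obtain ⟨ht₁re, ht₁im⟩ := Complex.nonneg_iff.mp ht₁
  rw [hsplit, Complex.sub_re, Complex.sub_im, ← ht₁im, zero_sub, abs_neg]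
  exact ⟨by linarith [Complex.re_le_norm t₂], (Complex.abs_im_le_norm t₂).trans ht₂⟩

/-- Part (i) of the unnumbered lemma in Section 3.4 of the paper: a state
`ω(·) = tr(ρ ·)` supported on the spectral subspace `P` of a low-lying group of
eigenvalues of `H` (of diameter at most `c` above the bottom `λ`) is an approximate
ground state: `Re ω(A*[H,A]) ≥ −c‖A‖²` and `|Im ω(A*[H,A])| ≤ c‖A‖²`. -/
theorem approximate_ground_state_energy_bound {H : Type*} [NormedAddCommGroup H]
    [InnerProductSpace ℂ H] [FiniteDimensional ℂ H]
    (Hop P ρ : H →L[ℂ] H) (lam c : ℝ) (hc : 0 ≤ c)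
    (hH_sa : IsSelfAdjoint Hop)
    (hH_ge : ∀ u : H, lam * ‖u‖ ^ 2 ≤ (inner ℂ u (Hop u) : ℂ).re)
    (hP_sa : IsSelfAdjoint P) (hP_idem : P * P = P)
    (hPH : Hop * P = P * Hop)
    (hnorm : ‖(Hop - (lam : ℂ) • 1) * P‖ ≤ c)
    (hρ_sa : IsSelfAdjoint ρ) (hρ_pos : ∀ u : H, 0 ≤ (inner ℂ u (ρ u) : ℂ).re)
    (htr : LinearMap.trace ℂ H ρ.toLinearMap = 1)
    (hsupp : P * ρ * P = ρ) :
    ∀ A : H →L[ℂ] H,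
      -c * ‖A‖ ^ 2
          ≤ (LinearMap.trace ℂ H (ρ * (star A * (Hop * A - A * Hop))).toLinearMap).re
        ∧ |(LinearMap.trace ℂ H (ρ * (star A * (Hop * A - A * Hop))).toLinearMap).im|
            ≤ c * ‖A‖ ^ 2 :=
  approximate_ground_state_energy_bound_general Hop P ρ lam c hH_sa hH_ge hP_idem hnorm hρ_sa hρ_pos
    htr hsupp
end

section
/- Let E be a normed additive commutative group, F : ℕ → (0,∞) a function, M ≥ 0, and g : Finset(ℤ) → E such that for all x, y ∈ ℤ, the sum over all finite X ⊆ ℤ with x ∈ X and y ∈ X of ‖g(X)‖ is at most M·F(|x−y|). Let Z_1 ⊆ Z_2 ⊆ ⋯ ⊆ Z_N be a nested chain of nonempty finite subsets of ℤ with diam(Z_1) = n. Then ∑_{k=1}^{N} ‖g(Z_k)‖ ≤ M·F(n). -/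
open Finset

theorem sum_norm_comp_le_of_injective {α ι E : Type*} [DecidableEq α] [Fintype ι]
    [SeminormedAddCommGroup E] {g : Finset α → E} {x y : α} {C : ℝ}
    (hg : ∀ s : Finset (Finset α), (∀ X ∈ s, x ∈ X ∧ y ∈ X) → ∑ X ∈ s, ‖g X‖ ≤ C)
    {Z : ι → Finset α} (hZ : Function.Injective Z) (hxy : ∀ k, x ∈ Z k ∧ y ∈ Z k) :
    ∑ k, ‖g (Z k)‖ ≤ C := by
  rw [← sum_image (f := fun X => ‖g X‖) fun a _ b _ h => hZ h]
  exact hg _ fun X hX => by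
    obtain ⟨k, -, rfl⟩ := mem_image.mp hX
    exact hxy k

theorem fnorm_nested_chain_bound_general {E : Type*} [NormedAddCommGroup E]
    (F : ℕ → ℝ) (M : ℝ)
    (g : Finset ℤ → E)
    (hg : ∀ x y : ℤ, ∀ s : Finset (Finset ℤ), (∀ X ∈ s, x ∈ X ∧ y ∈ X) →
      ∑ X ∈ s, ‖g X‖ ≤ M * F (x - y).natAbs)
    (N : ℕ) (Z : Fin (N + 1) → Finset ℤ) (hZ : StrictMono Z)
    (hne : (Z 0).Nonempty) (n : ℕ)
    (hdiam : (Z 0).max' hne - (Z 0).min' hne = (n : ℤ)) :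
    ∑ k : Fin (N + 1), ‖g (Z k)‖ ≤ M * F n := by
  have hsub : ∀ k, Z 0 ⊆ Z k := fun k => hZ.monotone (Fin.zero_le k)
  have hn : ((Z 0).max' hne - (Z 0).min' hne).natAbs = n := by
    have := min'_le_max' (Z 0) hne
    omega
  rw [← hn]
  exact sum_norm_comp_le_of_injective (hg _ _) hZ.injective fun k =>
    ⟨hsub k (max'_mem _ hne), hsub k (min'_mem _ hne)⟩

/-- Part (1) of Proposition 6.3 of the paper: for an interaction `g` whose partial
sums over distinct finite sets containing two fixed points `x, y` are bounded by
`M·F(|x−y|)`, the norms along any nested chain of nonempty finite sets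
`Z 0 ⊂ Z 1 ⊂ ⋯ ⊂ Z N` sum to at most `M·F(diam (Z 0))`. -/
theorem fnorm_nested_chain_bound {E : Type*} [NormedAddCommGroup E]
    (F : ℕ → ℝ) (hF : ∀ n, 0 < F n) (M : ℝ) (hM : 0 ≤ M)
    (g : Finset ℤ → E)
    (hg : ∀ x y : ℤ, ∀ s : Finset (Finset ℤ), (∀ X ∈ s, x ∈ X ∧ y ∈ X) →
      ∑ X ∈ s, ‖g X‖ ≤ M * F (x - y).natAbs)
    (N : ℕ) (Z : Fin (N + 1) → Finset ℤ) (hZ : StrictMono Z)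
    (hne : (Z 0).Nonempty) (n : ℕ)
    (hdiam : (Z 0).max' hne - (Z 0).min' hne = (n : ℤ)) :
    ∑ k : Fin (N + 1), ‖g (Z k)‖ ≤ M * F n :=
  fnorm_nested_chain_bound_general F M g hg N Z hZ hne n hdiam
end

section
/- Let E be a normed additive commutative group, R ≥ 1 an integer, M ≥ 0, and g : Finset(ℤ) → E such that g(X) = 0 whenever diam(X) > R and ‖g(X)‖ ≤ M for all X. Let F : ℕ → (0,∞) be monotone non-increasing. Then there exists C ≥ 0 such that for all x, y ∈ ℤ, the sum over all finite X ⊆ ℤ with x ∈ X and y ∈ X of ‖g(X)‖ is at most C·F(|x−y|); in particular one may take C = 2^{3R}·M/F(R). -/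
/-! A set `X ∋ x` on which `g` does not vanish has diameter at most `R`, so it lies in the
`2R + 1` points of `[x - R, x + R]`; hence at most `2^(2R+1) ≤ 2^(3R)` such sets carry weight,
each at most `M`. If `|x - y| > R` no set contains both points with nonzero weight; otherwise
`F R ≤ F |x - y|` by monotonicity. -/

open Finset

lemma Finset.subset_Icc_of_forall_sub_le {X : Finset ℤ} {x R : ℤ} (hx : x ∈ X)
    (hdiam : ∀ a ∈ X, ∀ b ∈ X, b - a ≤ R) : X ⊆ Icc (x - R) (x + R) := fun z hz =>
  mem_Icc.2 ⟨by linarith [hdiam z hz x hx], by linarith [hdiam x hx z hz]⟩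

lemma Finset.sum_norm_le_card_filter_ne_zero_mul {ι E : Type*} [NormedAddCommGroup E]
    [DecidableEq E] (s : Finset ι) (f : ι → E) {M : ℝ} (hf : ∀ i, ‖f i‖ ≤ M) :
    ∑ i ∈ s, ‖f i‖ ≤ #(s.filter (f · ≠ 0)) * M :=
  calc ∑ i ∈ s, ‖f i‖ = ∑ i ∈ s.filter (f · ≠ 0), ‖f i‖ :=
        (sum_filter_of_ne fun _ _ h => norm_ne_zero_iff.1 h).symm
    _ ≤ #(s.filter (f · ≠ 0)) • M := sum_le_card_nsmul _ _ M fun i _ => hf i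
    _ = #(s.filter (f · ≠ 0)) * M := nsmul_eq_mul _ _

section FiniteRange

variable {E : Type*} [NormedAddCommGroup E] {R : ℕ} {g : Finset ℤ → E}

lemma card_filter_ne_zero_le_of_finite_range [DecidableEq E]
    (hrange : ∀ X : Finset ℤ, (∃ x ∈ X, ∃ y ∈ X, (R : ℤ) < y - x) → g X = 0)
    {x : ℤ} {s : Finset (Finset ℤ)} (hs : ∀ X ∈ s, x ∈ X) :
    #(s.filter (g · ≠ 0)) ≤ 2 ^ (2 * R + 1) := by
  have hsub : s.filter (g · ≠ 0) ⊆ (Icc (x - R) (x + R)).powerset := by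
    intro X hX
    obtain ⟨hXs, hX0⟩ := mem_filter.1 hX
    refine mem_powerset.2 (subset_Icc_of_forall_sub_le (hs X hXs) fun a ha b hb => ?_)
    by_contra! hlt
    exact hX0 (hrange X ⟨a, ha, b, hb, hlt⟩)
  calc #(s.filter (g · ≠ 0)) ≤ #(Icc (x - R) (x + R)).powerset := card_le_card hsub
    _ = 2 ^ (2 * R + 1) := by rw [card_powerset, Int.card_Icc]; congr 1; omega

lemma sum_norm_le_of_finite_range
    (hrange : ∀ X : Finset ℤ, (∃ x ∈ X, ∃ y ∈ X, (R : ℤ) < y - x) → g X = 0)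
    {M : ℝ} (hM : 0 ≤ M) (hbdd : ∀ X : Finset ℤ, ‖g X‖ ≤ M)
    {x : ℤ} {s : Finset (Finset ℤ)} (hs : ∀ X ∈ s, x ∈ X) :
    ∑ X ∈ s, ‖g X‖ ≤ 2 ^ (2 * R + 1) * M := by
  classical
  exact (sum_norm_le_card_filter_ne_zero_mul s g hbdd).trans <| mul_le_mul_of_nonneg_right
    (by exact_mod_cast card_filter_ne_zero_le_of_finite_range hrange hs) hM

lemma sum_norm_eq_zero_of_finite_range
    (hrange : ∀ X : Finset ℤ, (∃ x ∈ X, ∃ y ∈ X, (R : ℤ) < y - x) → g X = 0)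
    {x y : ℤ} (hxy : (R : ℤ) < |x - y|) {s : Finset (Finset ℤ)}
    (hs : ∀ X ∈ s, x ∈ X ∧ y ∈ X) :
    ∑ X ∈ s, ‖g X‖ = 0 := by
  refine sum_eq_zero fun X hX => norm_eq_zero.2 ?_
  obtain ⟨hx, hy⟩ := hs X hX
  rcases abs_cases (x - y) with ⟨h, _⟩ | ⟨h, _⟩
  · exact hrange X ⟨y, hy, x, hx, by omega⟩
  · exact hrange X ⟨x, hx, y, hy, by omega⟩

end FiniteRange

/-- Part (2) of Proposition 6.3 of the paper: every uniformly bounded finite-range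
interaction `g` on `ℤ` has finite `F`-norm for any positive non-increasing `F`;
one may take the constant `C = 2^{3R}·M/F(R)`. -/
theorem finite_range_has_finite_fnorm {E : Type*} [NormedAddCommGroup E]
    (R : ℕ) (hR : 1 ≤ R) (M : ℝ) (hM : 0 ≤ M)
    (g : Finset ℤ → E)
    (hrange : ∀ X : Finset ℤ, (∃ x ∈ X, ∃ y ∈ X, (R : ℤ) < y - x) → g X = 0)
    (hbdd : ∀ X : Finset ℤ, ‖g X‖ ≤ M)
    (F : ℕ → ℝ) (hFpos : ∀ n, 0 < F n) (hFanti : Antitone F) :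
    ∃ C : ℝ, 0 ≤ C ∧ C = (2 : ℝ) ^ (3 * R) * M / F R ∧
      ∀ x y : ℤ, ∀ s : Finset (Finset ℤ), (∀ X ∈ s, x ∈ X ∧ y ∈ X) →
        ∑ X ∈ s, ‖g X‖ ≤ C * F (x - y).natAbs := by
  have hFR := hFpos R
  refine ⟨2 ^ (3 * R) * M / F R, by positivity, rfl, fun x y s hs => ?_⟩
  by_cases hxy : (R : ℤ) < |x - y|
  · rw [sum_norm_eq_zero_of_finite_range hrange hxy hs]
    have := hFpos (x - y).natAbs
    positivity
  · have hFxy : F R ≤ F (x - y).natAbs := hFanti (by have := abs_le.1 (not_lt.1 hxy); omega)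
    calc ∑ X ∈ s, ‖g X‖ ≤ 2 ^ (2 * R + 1) * M :=
          sum_norm_le_of_finite_range hrange hM hbdd fun X hX => (hs X hX).1
      _ ≤ 2 ^ (3 * R) * M := by gcongr <;> [norm_num; omega]
      _ = 2 ^ (3 * R) * M / F R * F R := by field_simp
      _ ≤ 2 ^ (3 * R) * M / F R * F (x - y).natAbs := by gcongr
end
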